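/- For integers d ≥ 2 and k ≥ 2, with a = 1/√d, b = √(d-1)/d, and w defined by w_ℓ = sqrt(2/(k+1))·sin((ℓ+1)kπ/(k+1)), the product w_0·w_1 is nonpositive, and hence w^T A_k w ≤ 2b·cos(kπ/(k+1)), where A_k is the tridiagonal matrix with superdiagonal (a, b, ..., b) and zero diagonal. -/
import Mathlib

open Real Matrix Finset

private lemma trig_step' (θ x : ℝ) :
    4 * Real.sin θ * (Real.sin x * Real.sin (x + θ)) =
      2 * Real.sin θ * Real.cos θ - Real.sin (2*(x+θ)) + Real.sin (2*x) := by
  simp only [Real.sin_two_mul, Real.sin_add, Real.cos_add]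
  linear_combination (2*Real.sin θ*Real.cos θ) * (Real.sin_sq_add_cos_sq x)
    + (2*Real.sin x*Real.cos x) * (Real.sin_sq_add_cos_sq θ)

private lemma telesum' (θ : ℝ) (n : ℕ) :
    4 * Real.sin θ * ∑ l ∈ range n, Real.sin (l*θ) * Real.sin ((l+1)*θ)
      = 2*n*Real.sin θ*Real.cos θ - Real.sin (2*n*θ) := by
  induction n with
  | zero => simp
  | succ n ih =>
    rw [Finset.sum_range_succ, mul_add, ih]
    have h := trig_step' θ (n*θ)
    push_cast
    have e1 : ((n:ℝ)+1)*θ = n*θ + θ := by ring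
    rw [e1]
    have e2 : (2*((n:ℝ)*θ+θ)) = 2*((n:ℝ)+1)*θ := by ring
    have e3 : (2*((n:ℝ)*θ)) = 2*(n:ℝ)*θ := by ring
    rw [e2, e3] at h
    linarith

private lemma quad_reduce' (k : ℕ) (a b : ℝ) (F : ℕ → ℝ) :
    ∑ i ∈ range k, ∑ j ∈ range k,
        F i * (if i + 1 = j ∨ j + 1 = i then (if i + j = 1 then a else b) else 0) * F j
      = ∑ i ∈ range (k-1), 2 * (if i = 0 then a else b) * (F i * F (i+1)) := by
  set g : ℕ → ℕ → ℝ := fun i j => (if i + j = 1 then a else b) * (F i * F j) with hg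
  have split : ∀ i j : ℕ, F i * (if i + 1 = j ∨ j + 1 = i then (if i + j = 1 then a else b) else 0) * F j
      = (if i + 1 = j then g i j else 0) + (if j + 1 = i then g i j else 0) := by
    intro i j
    by_cases h1 : i + 1 = j <;> by_cases h2 : j + 1 = i <;>
      simp [hg, h1, h2] <;> first | omega | ring_nf
  simp only [split, Finset.sum_add_distrib]
  have hswap : ∑ i ∈ range k, ∑ j ∈ range k, (if j + 1 = i then g i j else 0)
      = ∑ i ∈ range k, ∑ j ∈ range k, (if i + 1 = j then g i j else 0) := by
    rw [Finset.sum_comm]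
    refine Finset.sum_congr rfl fun i _ => Finset.sum_congr rfl fun j _ => ?_
    by_cases h : i + 1 = j <;> simp [h, hg]
    · rw [show j + i = i + j from by omega]; ring
  rw [hswap]
  have hinner : ∀ i, ∑ j ∈ range k, (if i + 1 = j then g i j else 0)
      = if i + 1 < k then g i (i+1) else 0 := by
    intro i
    rw [Finset.sum_ite_eq (range k) (i+1) (g i)]
    simp [Finset.mem_range]
  simp only [hinner]
  have hsub : ∑ i ∈ range (k-1), (if i + 1 < k then g i (i+1) else 0)
      = ∑ i ∈ range k, (if i + 1 < k then g i (i+1) else 0) := by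
    apply Finset.sum_subset (Finset.range_subset_range.2 (Nat.sub_le k 1))
    intro x hx hx'
    simp only [Finset.mem_range] at hx hx'
    rw [if_neg (by omega)]
  rw [← hsub, ← two_mul, Finset.mul_sum]
  refine Finset.sum_congr rfl fun i hi => ?_
  simp only [Finset.mem_range] at hi
  rw [if_pos (by omega), hg]
  simp only []
  by_cases h0 : i = 0
  · subst h0; simp; ring
  · rw [if_neg h0, if_neg (by omega : ¬ i + (i+1) = 1)]; ring

private lemma fin_double' (n : ℕ) (g : ℕ → ℕ → ℝ) :
    ∑ i : Fin n, ∑ j : Fin n, g i j = ∑ i ∈ range n, ∑ j ∈ range n, g i j := by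
  calc ∑ i : Fin n, ∑ j : Fin n, g ↑i ↑j
      = ∑ i : Fin n, ∑ j ∈ range n, g ↑i j :=
        Finset.sum_congr rfl fun i _ => Fin.sum_univ_eq_sum_range (g ↑i) n
    _ = ∑ i ∈ range n, ∑ j ∈ range n, g i j :=
        Fin.sum_univ_eq_sum_range (fun i => ∑ j ∈ range n, g i j) n

private lemma sum_eval' (k : ℕ) (hk : 2 ≤ k) :
    ∑ l ∈ range k, Real.sin (l * ((k:ℝ)*π/(k+1))) * Real.sin ((l+1) * ((k:ℝ)*π/(k+1)))
      = ((k:ℝ)+1)/2 * Real.cos ((k:ℝ)*π/(k+1)) := by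
  set θ := (k:ℝ)*π/(k+1) with hθ
  have hk1 : (0:ℝ) < (k:ℝ)+1 := by positivity
  have hθeq : θ = π - π/((k:ℝ)+1) := by rw [hθ]; field_simp; ring
  have hsπ : 0 < Real.sin (π/((k:ℝ)+1)) := by
    apply Real.sin_pos_of_pos_of_lt_pi (by positivity)
    have : (1:ℝ) < (k:ℝ)+1 := by
      have : (2:ℝ) ≤ (k:ℝ) := by exact_mod_cast hk
      linarith
    exact div_lt_self pi_pos this
  have hs : 0 < Real.sin θ := by rw [hθeq, Real.sin_pi_sub]; exact hsπ
  have h2k : Real.sin (2*(k:ℝ)*θ) = - Real.sin (2*θ) := by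
    have harg : 2*(k:ℝ)*θ = -(2*θ) + (k:ℤ) * (2*π) := by
      rw [hθ]; push_cast; field_simp; ring
    rw [harg, Real.sin_add_int_mul_two_pi, Real.sin_neg]
  have ht := telesum' θ k
  rw [h2k, Real.sin_two_mul] at ht
  have h4 : (4:ℝ) * Real.sin θ ≠ 0 := by positivity
  apply mul_left_cancel₀ h4
  rw [ht]; ring

theorem w0w1_nonpos_and_quadform_le (k d : ℕ) (hk : 2 ≤ k) (hd : 2 ≤ d)
    (a b : ℝ) (ha : a = 1 / Real.sqrt d) (hb : b = Real.sqrt (d - 1) / d)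
    (A : Matrix (Fin k) (Fin k) ℝ)
    (hA : A = Matrix.of fun i j : Fin k =>
      if (i : ℕ) + 1 = j ∨ (j : ℕ) + 1 = i then
        (if (i : ℕ) + (j : ℕ) = 1 then a else b)
      else 0)
    (w : Fin k → ℝ)
    (hw : w = fun l : Fin k => Real.sqrt (2 / (k + 1)) * Real.sin (((l : ℕ) + 1) * k * π / (k + 1))) :
    w ⟨0, by omega⟩ * w ⟨1, by omega⟩ ≤ 0 ∧
      w ⬝ᵥ A.mulVec w ≤ 2 * b * Real.cos (k * π / (k + 1)) := by
  have hk1 : (0:ℝ) < (k:ℝ)+1 := by positivity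
  have hkR : (2:ℝ) ≤ (k:ℝ) := by exact_mod_cast hk
  set θ := (k:ℝ)*π/(k+1) with hθ
  set C := Real.sqrt (2 / ((k:ℝ) + 1)) with hC
  have hC0 : 0 ≤ C := Real.sqrt_nonneg _
  have hC2 : C * C = 2 / ((k:ℝ)+1) := Real.mul_self_sqrt (by positivity)
  set F : ℕ → ℝ := fun i => C * Real.sin (((i:ℝ) + 1) * (k:ℝ) * π / ((k:ℝ) + 1)) with hF
  -- basic trig signs
  have hθeq : θ = π - π/((k:ℝ)+1) := by rw [hθ]; field_simp; ring
  have hsπ : 0 < Real.sin (π/((k:ℝ)+1)) := by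
    apply Real.sin_pos_of_pos_of_lt_pi (by positivity)
    exact div_lt_self pi_pos (by linarith)
  have hs : 0 < Real.sin θ := by rw [hθeq, Real.sin_pi_sub]; exact hsπ
  have hcos : Real.cos θ ≤ 0 := by
    rw [hθeq, Real.cos_pi_sub, neg_nonpos]
    apply Real.cos_nonneg_of_mem_Icc
    constructor
    · have : 0 ≤ π/((k:ℝ)+1) := by positivity
      have h2 : 0 < π/2 := by positivity
      linarith
    · rw [div_le_div_iff₀ hk1 (by norm_num : (0:ℝ) < 2)]
      nlinarith [pi_pos]
  have harg : ∀ i : ℕ, ((i:ℝ) + 1) * (k:ℝ) * π / ((k:ℝ) + 1) = ((i:ℝ)+1) * θ := by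
    intro i; rw [hθ]; ring
  have hF01 : F 0 * F 1 ≤ 0 := by
    have h0 : F 0 = C * Real.sin θ := by rw [hF]; simp only []; rw [harg 0]; norm_num
    have h1 : F 1 = C * Real.sin (2*θ) := by
      rw [hF]; simp only []; rw [harg 1]; norm_num
    rw [h0, h1, Real.sin_two_mul]
    have hcs : 0 ≤ C * Real.sin θ := mul_nonneg hC0 hs.le
    nlinarith [mul_nonneg hcs hcs, hcos]
  -- a ≥ b
  have hdR : (2:ℝ) ≤ (d:ℝ) := by exact_mod_cast hd
  have hsd : 0 < Real.sqrt d := Real.sqrt_pos.2 (by linarith)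
  have hab : b ≤ a := by
    rw [ha, hb, div_le_div_iff₀ (by linarith : (0:ℝ) < (d:ℝ)) hsd, one_mul]
    calc Real.sqrt ((d:ℝ)-1) * Real.sqrt d = Real.sqrt (((d:ℝ)-1)*(d:ℝ)) :=
          (Real.sqrt_mul (by linarith) _).symm
      _ ≤ Real.sqrt ((d:ℝ)*(d:ℝ)) := Real.sqrt_le_sqrt (by nlinarith)
      _ = (d:ℝ) := Real.sqrt_mul_self (by linarith)
  constructor
  · rw [hw]
    have h := hF01
    rw [hF] at h
    simpa using h
  -- quadratic form identity
  have hQR : w ⬝ᵥ A.mulVec w = ∑ i ∈ range k, ∑ j ∈ range k,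
      F i * (if i + 1 = j ∨ j + 1 = i then (if i + j = 1 then a else b) else 0) * F j := by
    rw [← fin_double' k (fun i j =>
      F i * (if i + 1 = j ∨ j + 1 = i then (if i + j = 1 then a else b) else 0) * F j)]
    simp only [hA, hw, Matrix.mulVec, dotProduct, Matrix.of_apply, Finset.mul_sum, hF]
    refine Finset.sum_congr rfl fun i _ => Finset.sum_congr rfl fun j _ => ?_
    ring
  rw [hQR, quad_reduce' k a b F]
  -- split off i = 0 term
  have hsplit : ∑ i ∈ range (k-1), 2 * (if i = 0 then a else b) * (F i * F (i+1))
      = 2*b*(∑ i ∈ range (k-1), F i * F (i+1)) + 2*(a-b)*(F 0 * F 1) := by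
    have hterm : ∀ i ∈ range (k-1), 2 * (if i = 0 then a else b) * (F i * F (i+1))
        = 2*b*(F i * F (i+1)) + (if i = 0 then 2*(a-b)*(F 0 * F 1) else 0) := by
      intro i _
      by_cases h : i = 0
      · subst h; simp; ring
      · rw [if_neg h, if_neg h]; ring
    rw [Finset.sum_congr rfl hterm, Finset.sum_add_distrib,
      Finset.sum_ite_eq' (range (k-1)) 0 (fun _ => 2*(a-b)*(F 0 * F 1))]
    rw [if_pos (by simp [Finset.mem_range]; omega), Finset.mul_sum]
  rw [hsplit]
  -- evaluate the full sum
  have hFF : ∀ i : ℕ, F i * F (i+1)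
      = (2/((k:ℝ)+1)) * (Real.sin (((i+1:ℕ):ℝ)*θ) * Real.sin ((((i+1:ℕ):ℝ)+1)*θ)) := by
    intro i
    rw [hF]; simp only []
    rw [harg i, harg (i+1)]
    push_cast
    rw [← hC2]; ring_nf
  have hpeel : ∑ l ∈ range k, Real.sin ((l:ℝ)*θ) * Real.sin (((l:ℝ)+1)*θ)
      = ∑ i ∈ range (k-1), Real.sin (((i+1:ℕ):ℝ)*θ) * Real.sin ((((i+1:ℕ):ℝ))*θ+θ)
        + Real.sin (((0:ℕ):ℝ)*θ) * Real.sin ((((0:ℕ):ℝ)+1)*θ) := by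
    rw [show k = (k-1)+1 from by omega]
    rw [Finset.sum_range_succ' (fun l => Real.sin ((l:ℝ)*θ) * Real.sin (((l:ℝ)+1)*θ)) (k-1)]
    simp only [Nat.add_sub_cancel]
    congr 1
    refine Finset.sum_congr rfl fun i _ => ?_
    push_cast; ring_nf
  have hshift : ∑ i ∈ range (k-1), F i * F (i+1)
      = (2/((k:ℝ)+1)) * ∑ l ∈ range k, Real.sin ((l:ℝ)*θ) * Real.sin (((l:ℝ)+1)*θ) := by
    rw [hpeel]
    simp only [Nat.cast_zero, zero_mul, Real.sin_zero, add_zero]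
    rw [Finset.mul_sum]
    refine Finset.sum_congr rfl fun i _ => ?_
    rw [hFF i]; push_cast; ring_nf
  have hsum := sum_eval' k hk
  rw [← hθ] at hsum
  rw [hshift, hsum]
  have hX : 2*b*((2/((k:ℝ)+1)) * (((k:ℝ)+1)/2 * Real.cos θ)) = 2*b*Real.cos θ := by
    field_simp
  have hneg : 2*(a-b)*(F 0 * F 1) ≤ 0 :=
    mul_nonpos_of_nonneg_of_nonpos (by linarith) hF01
  linarith [hX, hneg]
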